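/- For every compact set A ⊆ 2^ω, the Hausdorff dimension of A satisfies dim_H(A) = sup{ s > 0 : there exist a constant c > 0 and a mass distribution μ on A such that μ(N_σ) ≤ c·2^{-s·|σ|} for all finite binary strings σ }, where the supremum of the empty set is taken to be 0. -/

import Mathlib

/-!
For cylinders the weight `2^(-s|σ|)` is `diam(N_σ)^s`, and every set `E` lies in a cylinder of
diameter at most `2 diam E`. Hence a mass distribution with `μ(N_σ) ≤ c 2^(-s|σ|)` is bounded
by `c 2^s μH[s]`, which forces `μH[s](A) > 0` and `s ≤ dim_H A`.

Conversely, if `μH[s](A) > 0`, the content `g σ` of `A ∩ N_σ` computed with finite cylinder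
covers is positive at the root, at most `2^(-s|σ|)`, and subadditive along the tree. Splitting
`g []` down the tree in proportion to the values of `g` on the children gives an additive
`f ≤ g`; since cylinders are compact and open, `f` is the restriction to cylinders of a Borel
measure, which vanishes off the closed set `A` (Frostman's lemma).
-/

open MeasureTheory ENNReal

noncomputable local instance : MetricSpace (ℕ → Bool) := PiNat.metricSpace

/-- The basic open cylinder `N_σ` of a finite binary string `σ` in Cantor space `2^ω`. -/
def cyl (σ : List Bool) : Set (ℕ → Bool) :=
  {x | ∀ i : Fin σ.length, x i = σ.get i}

/-- A mass distribution on `A` is a Borel probability measure vanishing outside `A`. -/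
def IsMassDistributionOn (μ : Measure (ℕ → Bool)) (A : Set (ℕ → Bool)) : Prop :=
  IsProbabilityMeasure μ ∧ μ Aᶜ = 0

open Set Filter Topology

lemma mem_cyl_iff {σ : List Bool} {x : ℕ → Bool} :
    x ∈ cyl σ ↔ ∀ i (hi : i < σ.length), x i = σ[i] :=
  ⟨fun h i hi => h ⟨i, hi⟩, fun h i => h i i.2⟩

@[simp]
lemma cyl_nil : cyl [] = univ := by
  ext x
  simp [mem_cyl_iff]

lemma cyl_mono {σ τ : List Bool} (h : σ <+: τ) : cyl τ ⊆ cyl σ := fun x hx =>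
  mem_cyl_iff.2 fun i hi => by
    rw [h.getElem hi]
    exact mem_cyl_iff.1 hx i (hi.trans_le h.length_le)

lemma mem_cyl_append_singleton {σ : List Bool} {b : Bool} {x : ℕ → Bool} :
    x ∈ cyl (σ ++ [b]) ↔ x ∈ cyl σ ∧ x σ.length = b := by
  simp only [mem_cyl_iff, List.length_append, List.length_singleton, Nat.lt_succ_iff_lt_or_eq]
  constructor
  · intro h
    refine ⟨fun i hi => ?_, ?_⟩
    · simpa [List.getElem_append_left hi] using h i (.inl hi)
    · simpa using h σ.length (.inr rfl)
  · rintro ⟨h, hb⟩ i (hi | rfl)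
    · simpa [List.getElem_append_left hi] using h i hi
    · simpa using hb

lemma cyl_eq_union (σ : List Bool) : cyl σ = cyl (σ ++ [false]) ∪ cyl (σ ++ [true]) := by
  ext x
  cases hx : x σ.length <;> simp [mem_cyl_append_singleton, hx]

lemma disjoint_cyl_append_false_true (σ : List Bool) :
    Disjoint (cyl (σ ++ [false])) (cyl (σ ++ [true])) :=
  disjoint_left.2 fun _ h₀ h₁ => Bool.false_ne_true
    ((mem_cyl_append_singleton.1 h₀).2.symm.trans (mem_cyl_append_singleton.1 h₁).2)

lemma cyl_nonempty (σ : List Bool) : (cyl σ).Nonempty :=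
  ⟨fun i => σ.getD i false, mem_cyl_iff.2 fun i hi => by simp [hi]⟩

lemma cyl_ofFn (x : ℕ → Bool) (n : ℕ) :
    cyl (List.ofFn fun i : Fin n => x i) = PiNat.cylinder x n := by
  ext y
  simp [mem_cyl_iff]

lemma cyl_eq_cylinder {σ : List Bool} {x : ℕ → Bool} (hx : x ∈ cyl σ) :
    cyl σ = PiNat.cylinder x σ.length := by
  ext y
  simp only [mem_cyl_iff, PiNat.mem_cylinder_iff] at hx ⊢
  exact forall₂_congr fun i hi => by rw [hx i hi]

lemma prefix_or_prefix_of_mem_cyl {σ τ : List Bool} {x : ℕ → Bool} (hσ : x ∈ cyl σ)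
    (hτ : x ∈ cyl τ) : σ <+: τ ∨ τ <+: σ := by
  wlog h : σ.length ≤ τ.length generalizing σ τ
  · exact (this hτ hσ (le_of_not_ge h)).symm
  refine .inl (List.prefix_iff_eq_take.2 (List.ext_getElem (by simp [h]) fun i h₁ h₂ => ?_))
  rw [List.getElem_take, ← mem_cyl_iff.1 hσ i h₁, ← mem_cyl_iff.1 hτ]

lemma prefix_of_mem_cyl_append_singleton {σ τ : List Bool} {b : Bool} {x : ℕ → Bool}
    (hσ : x ∈ cyl (σ ++ [b])) (hτ : x ∈ cyl τ) (h : ¬ τ <+: σ) : σ ++ [b] <+: τ := by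
  rcases prefix_or_prefix_of_mem_cyl hσ hτ with h' | h'
  · exact h'
  · rcases List.prefix_concat_iff.1 h' with rfl | h'
    · exact List.prefix_refl _
    · exact absurd h' h

lemma isClopen_cyl (σ : List Bool) : IsClopen (cyl σ) := by
  have : cyl σ = ⋂ i : Fin σ.length, (fun x : ℕ → Bool => x i) ⁻¹' {σ.get i} := by
    ext x
    simp [cyl]
  rw [this]
  exact isClopen_iInter_of_finite fun i => (isClopen_discrete _).preimage (continuous_apply _)

lemma measurableSet_cyl (σ : List Bool) : MeasurableSet (cyl σ) :=
  (isClopen_cyl σ).isClosed.measurableSet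

lemma edist_le_inv_two_pow_iff {x y : ℕ → Bool} {n : ℕ} :
    edist y x ≤ 2⁻¹ ^ n ↔ y ∈ PiNat.cylinder x n := by
  rw [PiNat.mem_cylinder_iff_dist_le, edist_dist, ← ENNReal.ofReal_le_ofReal_iff (by positivity),
    ENNReal.ofReal_pow (by norm_num), one_div, ENNReal.ofReal_inv_of_pos two_pos,
    ENNReal.ofReal_ofNat]

lemma ediam_cyl_le (σ : List Bool) : Metric.ediam (cyl σ) ≤ 2⁻¹ ^ σ.length :=
  Metric.ediam_le fun _ hx _ hy => edist_le_inv_two_pow_iff.2 (cyl_eq_cylinder hy ▸ hx)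

lemma ediam_le_one (E : Set (ℕ → Bool)) : Metric.ediam E ≤ 1 :=
  (Metric.ediam_mono (subset_univ E)).trans (by simpa using ediam_cyl_le [])

lemma subset_cyl_ofFn_of_ediam_le {E : Set (ℕ → Bool)} {x : ℕ → Bool} (hx : x ∈ E) {n : ℕ}
    (h : Metric.ediam E ≤ 2⁻¹ ^ n) : E ⊆ cyl (List.ofFn fun i : Fin n => x i) := fun y hy => by
  rw [cyl_ofFn, ← edist_le_inv_two_pow_iff]
  exact (Metric.edist_le_ediam_of_mem hy hx).trans h

noncomputable def cylWeight (s : ℝ) (σ : List Bool) : ℝ≥0∞ := 2 ^ (-s * σ.length)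

lemma cylWeight_eq_inv_two_pow_rpow (s : ℝ) (σ : List Bool) :
    cylWeight s σ = (2⁻¹ ^ σ.length) ^ s := by
  rw [cylWeight, ← ENNReal.rpow_natCast, ← ENNReal.rpow_neg_one, ← ENNReal.rpow_mul,
    ← ENNReal.rpow_mul]
  ring_nf

lemma cylWeight_ne_top (s : ℝ) (σ : List Bool) : cylWeight s σ ≠ ∞ :=
  ENNReal.rpow_ne_top_of_ne_zero two_ne_zero ofNat_ne_top

lemma ediam_cyl_rpow_le {s : ℝ} (hs : 0 ≤ s) (σ : List Bool) :
    Metric.ediam (cyl σ) ^ s ≤ cylWeight s σ :=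
  cylWeight_eq_inv_two_pow_rpow s σ ▸ ENNReal.rpow_le_rpow (ediam_cyl_le σ) hs

/-- The `s`-dimensional Hausdorff content of `E` computed with finite covers by cylinders. -/
noncomputable def cylContent (s : ℝ) (E : Set (ℕ → Bool)) : ℝ≥0∞ :=
  ⨅ F : {F : Finset (List Bool) // E ⊆ ⋃ τ ∈ F, cyl τ}, ∑ τ ∈ F.1, cylWeight s τ

section cylContent

variable {s : ℝ} {E E' : Set (ℕ → Bool)}

lemma cylContent_union_le : cylContent s (E ∪ E') ≤ cylContent s E + cylContent s E' := by
  classical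
  refine le_iInf_add_iInf fun F F' => iInf_le_of_le ⟨F.1 ∪ F'.1, ?_⟩ ?_
  · rw [Finset.set_biUnion_union]
    exact union_subset_union F.2 F'.2
  · exact (le_add_right le_rfl).trans_eq Finset.sum_union_inter

lemma cylContent_le_cylWeight {σ : List Bool} (h : E ⊆ cyl σ) : cylContent s E ≤ cylWeight s σ :=
  iInf_le_of_le ⟨{σ}, by simpa using h⟩ (by simp)

lemma cylContent_empty : cylContent s ∅ = 0 :=
  nonpos_iff_eq_zero.1 (iInf_le_of_le ⟨∅, by simp⟩ (by simp))

lemma hausdorffMeasure_eq_zero_of_cylContent_eq_zero (hs : 0 < s) (h : cylContent s E = 0) :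
    μH[s] E = 0 := by
  have hcover (n : ℕ) : ∃ F : {F : Finset (List Bool) // E ⊆ ⋃ τ ∈ F, cyl τ},
      ∑ τ ∈ F.1, cylWeight s τ < (2⁻¹ ^ n) ^ s := by
    have hpos : cylContent s E < (2⁻¹ ^ n) ^ s :=
      h ▸ ENNReal.rpow_pos (ENNReal.pow_pos (by norm_num) n) (by simp)
    exact iInf_lt_iff.1 hpos
  choose F hF using hcover
  have hsmall (n : ℕ) (τ : (F n).1) : Metric.ediam (cyl τ) ≤ 2⁻¹ ^ n := by
    refine (ENNReal.rpow_le_rpow_iff hs).1 ((ediam_cyl_rpow_le hs.le τ).trans ?_)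
    exact ((F n).1.single_le_sum (fun _ _ => zero_le) τ.2).trans (hF n).le
  have hlim : Tendsto (fun n : ℕ => ((2⁻¹ : ℝ≥0∞) ^ n) ^ s) atTop (𝓝 0) := by
    have := (ENNReal.continuous_rpow_const (y := s)).tendsto 0 |>.comp
      (ENNReal.tendsto_pow_atTop_nhds_zero_of_lt_one (r := 2⁻¹) (by norm_num))
    simpa [Function.comp_def, ENNReal.zero_rpow_of_pos hs] using this
  refine nonpos_iff_eq_zero.1 ((Measure.hausdorffMeasure_le_liminf_sum s E _
    (ENNReal.tendsto_pow_atTop_nhds_zero_of_lt_one (r := 2⁻¹) (by norm_num))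
    (fun n (τ : (F n).1) => cyl τ) (.of_forall hsmall) (.of_forall fun n => ?_)).trans ?_)
  · simpa [iUnion_subtype] using (F n).2
  · refine (liminf_le_liminf (.of_forall fun n => ?_)).trans_eq hlim.liminf_eq
    calc ∑ τ : (F n).1, Metric.ediam (cyl τ) ^ s
        = ∑ τ ∈ (F n).1, Metric.ediam (cyl τ) ^ s :=
          Finset.sum_coe_sort (F n).1 fun τ => Metric.ediam (cyl τ) ^ s
      _ ≤ ∑ τ ∈ (F n).1, cylWeight s τ := Finset.sum_le_sum fun τ _ => ediam_cyl_rpow_le hs.le τ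
      _ ≤ (2⁻¹ ^ n) ^ s := (hF n).le

end cylContent

def IsCylAdditive (w : List Bool → ℝ≥0∞) : Prop :=
  ∀ σ, w σ = w (σ ++ [false]) + w (σ ++ [true])

noncomputable def cylInf (w : List Bool → ℝ≥0∞) (E : Set (ℕ → Bool)) : ℝ≥0∞ :=
  ⨅ (σ : List Bool) (_ : E ⊆ cyl σ), w σ

namespace IsCylAdditive

variable {w : List Bool → ℝ≥0∞} (hw : IsCylAdditive w)
include hw

lemma le_of_prefix {σ τ : List Bool} (h : σ <+: τ) : w τ ≤ w σ := by
  induction τ using List.reverseRecOn with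
  | nil => rw [List.prefix_nil.1 h]
  | append_singleton τ b ih =>
    rcases List.prefix_concat_iff.1 h with rfl | h
    · exact le_rfl
    · refine le_trans ?_ (ih h)
      rw [hw τ]
      cases b
      exacts [le_self_add, le_add_self]

lemma le_sum_of_prefix {ι : Type*} {F : Finset ι} {τ : ι → List Bool} {σ : List Bool} {i : ι}
    (hi : i ∈ F) (h : τ i <+: σ) : w σ ≤ ∑ i ∈ F, w (τ i) :=
  (hw.le_of_prefix h).trans (F.single_le_sum (f := fun i => w (τ i)) (fun _ _ => zero_le) hi)

lemma le_sum_of_cyl_subset {ι : Type*} (F : Finset ι) (τ : ι → List Bool) {σ : List Bool}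
    (h : cyl σ ⊆ ⋃ i ∈ F, cyl (τ i)) : w σ ≤ ∑ i ∈ F, w (τ i) := by
  classical
  suffices key : ∀ k σ (F : Finset ι), (∀ i ∈ F, (τ i).length ≤ σ.length + k) →
      cyl σ ⊆ ⋃ i ∈ F, cyl (τ i) → w σ ≤ ∑ i ∈ F, w (τ i) from
    key _ σ F (fun i hi => (F.le_sup (f := fun i => (τ i).length) hi).trans le_add_self) h
  intro k
  induction k with
  | zero =>
    intro σ F hlen hcov
    obtain ⟨x, hx⟩ := cyl_nonempty σ
    obtain ⟨i, hi, hxi⟩ := mem_iUnion₂.1 (hcov hx)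
    refine hw.le_sum_of_prefix hi ?_
    rcases prefix_or_prefix_of_mem_cyl hx hxi with h | h
    · exact (h.eq_of_length_le (hlen i hi)) ▸ List.prefix_refl _
    · exact h
  | succ k ih =>
    intro σ F hlen hcov
    by_cases hpre : ∃ i ∈ F, τ i <+: σ
    · obtain ⟨i, hi, h⟩ := hpre
      exact hw.le_sum_of_prefix hi h
    push Not at hpre
    have hlen' (b : Bool) (i : ι) (hi : i ∈ F) : (τ i).length ≤ (σ ++ [b]).length + k := by
      have := hlen i hi
      simp only [List.length_append, List.length_singleton]
      omega
    rw [hw σ, ← Finset.sum_filter_add_sum_filter_not F (fun i => σ ++ [false] <+: τ i)]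
    refine add_le_add (ih _ _ (fun i hi => hlen' _ i (Finset.mem_filter.1 hi).1) fun x hx => ?_)
      (ih _ _ (fun i hi => hlen' _ i (Finset.mem_filter.1 hi).1) fun x hx => ?_)
    · obtain ⟨i, hi, hxi⟩ := mem_iUnion₂.1 (hcov (cyl_mono (σ.prefix_append _) hx))
      exact mem_iUnion₂.2 ⟨i, Finset.mem_filter.2
        ⟨hi, prefix_of_mem_cyl_append_singleton hx hxi (hpre i hi)⟩, hxi⟩
    · obtain ⟨i, hi, hxi⟩ := mem_iUnion₂.1 (hcov (cyl_mono (σ.prefix_append _) hx))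
      refine mem_iUnion₂.2 ⟨i, Finset.mem_filter.2 ⟨hi, fun h => ?_⟩, hxi⟩
      exact disjoint_left.1 (disjoint_cyl_append_false_true σ) (cyl_mono h hxi) hx

lemma outerMeasure_cyl_le {ν : OuterMeasure (ℕ → Bool)} (N : ℕ)
    (h : ∀ τ : List Bool, N ≤ τ.length → ν (cyl τ) ≤ w τ) (σ : List Bool) : ν (cyl σ) ≤ w σ := by
  suffices key : ∀ k σ, N ≤ σ.length + k → ν (cyl σ) ≤ w σ from key N σ le_add_self
  intro k
  induction k with
  | zero => exact h
  | succ k ih =>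
    intro σ hσ
    have hlen (b : Bool) : N ≤ (σ ++ [b]).length + k := by
      simp only [List.length_append, List.length_singleton]
      omega
    rw [cyl_eq_union, hw σ]
    exact (measure_union_le _ _).trans (add_le_add (ih _ (hlen _)) (ih _ (hlen _)))

lemma mkMetric'_cylInf_cyl_le (σ : List Bool) :
    OuterMeasure.mkMetric' (cylInf w) (cyl σ) ≤ w σ := by
  simp only [OuterMeasure.mkMetric', OuterMeasure.iSup_apply]
  refine iSup₂_le fun r hr => ?_
  obtain ⟨N, hN⟩ := ENNReal.exists_inv_two_pow_lt hr.ne'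
  refine hw.outerMeasure_cyl_le N (fun τ hτ => ?_) σ
  refine (OuterMeasure.mkMetric'.pre_le ((ediam_cyl_le τ).trans ?_)).trans (iInf₂_le τ Subset.rfl)
  exact (pow_le_pow_right_of_le_one' (by norm_num) hτ).trans hN.le

lemma le_tsum_of_cyl_subset_iUnion (hfin : w [] ≠ ∞) {σ : List Bool}
    {t : ℕ → Set (ℕ → Bool)} (h : cyl σ ⊆ ⋃ n, t n) :
    w σ ≤ ∑' n, ⨆ _ : (t n).Nonempty, cylInf w (t n) := by
  classical
  refine ENNReal.le_of_forall_pos_le_add fun ε hε _ => ?_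
  obtain ⟨δ, hδ, hδε⟩ := ENNReal.exists_pos_sum_of_countable (ENNReal.coe_ne_zero.2 hε.ne') ℕ
  have hτ (n : ℕ) : ∃ τ, (t n).Nonempty → t n ⊆ cyl τ ∧ w τ ≤ cylInf w (t n) + δ n := by
    by_cases hn : (t n).Nonempty
    · have hfin' : cylInf w (t n) ≠ ∞ := ne_top_of_le_ne_top hfin (iInf₂_le [] (by simp))
      obtain ⟨τ, hτ⟩ :=
        iInf_lt_iff.1 (ENNReal.lt_add_right hfin' (ENNReal.coe_ne_zero.2 (hδ n).ne'))
      obtain ⟨hsub, hlt⟩ := iInf_lt_iff.1 hτ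
      exact ⟨τ, fun _ => ⟨hsub, hlt.le⟩⟩
    · exact ⟨[], fun h => absurd h hn⟩
  choose τ hτ using hτ
  obtain ⟨I, hI⟩ := (isClopen_cyl σ).isClosed.isCompact.elim_finite_subcover
    (fun n => ⋃ _ : (t n).Nonempty, cyl (τ n))
    (fun n => isOpen_iUnion fun _ => (isClopen_cyl _).isOpen)
    (h.trans (iUnion_mono fun n x hx => mem_iUnion.2 ⟨⟨x, hx⟩, (hτ n ⟨x, hx⟩).1 hx⟩))
  have hcov : cyl σ ⊆ ⋃ n ∈ I.filter fun n => (t n).Nonempty, cyl (τ n) := fun x hx => by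
    obtain ⟨n, hn, hx⟩ := mem_iUnion₂.1 (hI hx)
    obtain ⟨hne, hx⟩ := mem_iUnion.1 hx
    exact mem_iUnion₂.2 ⟨n, Finset.mem_filter.2 ⟨hn, hne⟩, hx⟩
  calc w σ ≤ ∑ n ∈ I.filter fun n => (t n).Nonempty, w (τ n) := hw.le_sum_of_cyl_subset _ τ hcov
    _ ≤ ∑ n ∈ I.filter fun n => (t n).Nonempty,
          ((⨆ _ : (t n).Nonempty, cylInf w (t n)) + δ n) := Finset.sum_le_sum fun n hn => by
        rw [iSup_pos (Finset.mem_filter.1 hn).2]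
        exact (hτ n (Finset.mem_filter.1 hn).2).2
    _ ≤ ∑' n, ((⨆ _ : (t n).Nonempty, cylInf w (t n)) + δ n) := ENNReal.sum_le_tsum _
    _ = (∑' n, ⨆ _ : (t n).Nonempty, cylInf w (t n)) + ∑' n, (δ n : ℝ≥0∞) := ENNReal.tsum_add
    _ ≤ (∑' n, ⨆ _ : (t n).Nonempty, cylInf w (t n)) + ε := add_le_add_right hδε.le _

lemma le_mkMetric'_cylInf_cyl (hfin : w [] ≠ ∞) (σ : List Bool) :
    w σ ≤ OuterMeasure.mkMetric' (cylInf w) (cyl σ) := by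
  have hpre : OuterMeasure.mkMetric'.pre (cylInf w) 1 ≤ OuterMeasure.mkMetric' (cylInf w) :=
    le_iSup₂_of_le (f := fun r (_ : 0 < r) => OuterMeasure.mkMetric'.pre (cylInf w) r)
      1 one_pos le_rfl
  refine le_trans ?_ (hpre _)
  rw [OuterMeasure.mkMetric'.pre, OuterMeasure.boundedBy_apply]
  refine le_iInf₂ fun t ht => (hw.le_tsum_of_cyl_subset_iUnion hfin ht).trans
    (ENNReal.tsum_le_tsum fun n => iSup_mono fun _ => ?_)
  exact le_extend (P := fun s => Metric.ediam s ≤ 1) _ (ediam_le_one (t n))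

lemma exists_measure_cyl_eq (hfin : w [] ≠ ∞) :
    ∃ μ : Measure (ℕ → Bool), ∀ σ, μ (cyl σ) = w σ :=
  ⟨Measure.mkMetric' (cylInf w), fun σ => by
    rw [Measure.mkMetric', toMeasure_apply _ _ (measurableSet_cyl σ)]
    exact le_antisymm (hw.mkMetric'_cylInf_cyl_le σ) (hw.le_mkMetric'_cylInf_cyl hfin σ)⟩

end IsCylAdditive

section splitFlow

variable (g : List Bool → ℝ≥0∞)

/-- Starting from `g []`, the mass at `σ` is passed on to `σ ++ [b]` in proportion to
`g (σ ++ [b])`. -/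
noncomputable def splitFlow (σ : List Bool) : ℝ≥0∞ :=
  σ.reverseRecOn (g []) fun τ b m =>
    m * (g (τ ++ [b]) / (g (τ ++ [false]) + g (τ ++ [true])))

variable {g}

@[simp]
lemma splitFlow_nil : splitFlow g [] = g [] := by
  rw [splitFlow, List.reverseRecOn_nil]

lemma splitFlow_append_singleton (σ : List Bool) (b : Bool) :
    splitFlow g (σ ++ [b]) =
      splitFlow g σ * (g (σ ++ [b]) / (g (σ ++ [false]) + g (σ ++ [true]))) := by
  rw [splitFlow, List.reverseRecOn_concat, splitFlow]

variable (hg : ∀ σ, g σ ≤ g (σ ++ [false]) + g (σ ++ [true]))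
include hg

lemma splitFlow_le (σ : List Bool) : splitFlow g σ ≤ g σ := by
  induction σ using List.reverseRecOn with
  | nil => simp
  | append_singleton σ b ih =>
    rw [splitFlow_append_singleton]
    calc splitFlow g σ * (g (σ ++ [b]) / (g (σ ++ [false]) + g (σ ++ [true])))
        ≤ (g (σ ++ [false]) + g (σ ++ [true])) *
            (g (σ ++ [b]) / (g (σ ++ [false]) + g (σ ++ [true]))) :=
          mul_le_mul_left (ih.trans (hg σ)) _
      _ ≤ g (σ ++ [b]) := ENNReal.mul_div_le

lemma isCylAdditive_splitFlow (hfin : ∀ σ, g σ ≠ ∞) : IsCylAdditive (splitFlow g) := by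
  intro σ
  rw [splitFlow_append_singleton, splitFlow_append_singleton, ← mul_add,
    ENNReal.div_add_div_same]
  set D := g (σ ++ [false]) + g (σ ++ [true])
  rcases eq_or_ne D 0 with hD | hD
  · have : splitFlow g σ = 0 := nonpos_iff_eq_zero.1 ((splitFlow_le hg σ).trans (hD ▸ hg σ))
    simp [this]
  · rw [ENNReal.div_self hD (ENNReal.add_ne_top.2 ⟨hfin _, hfin _⟩), mul_one]

end splitFlow

lemma measure_compl_eq_zero_of_cyl {A : Set (ℕ → Bool)} (hA : IsClosed A) {μ : Measure (ℕ → Bool)}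
    (h : ∀ σ, Disjoint A (cyl σ) → μ (cyl σ) = 0) : μ Aᶜ = 0 := by
  have hcov : Aᶜ ⊆ ⋃ (σ : List Bool) (_ : Disjoint A (cyl σ)), cyl σ := fun x hx => by
    obtain ⟨n, hn⟩ := PiNat.exists_disjoint_cylinder hA hx
    rw [← cyl_ofFn] at hn
    exact mem_iUnion₂.2 ⟨_, hn, cyl_ofFn x n ▸ PiNat.self_mem_cylinder x n⟩
  exact measure_mono_null hcov (measure_iUnion_null fun σ => measure_iUnion_null (h σ))

/-- Frostman's lemma in Cantor space. -/
theorem exists_mass_distribution_of_hausdorffMeasure_ne_zero {A : Set (ℕ → Bool)}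
    (hA : IsClosed A) {s : ℝ} (hs : 0 < s) (hH : μH[s] A ≠ 0) :
    ∃ (c : ℝ) (μ : Measure (ℕ → Bool)), 0 < c ∧ IsMassDistributionOn μ A ∧
      ∀ σ, μ (cyl σ) ≤ ENNReal.ofReal c * cylWeight s σ := by
  set g : List Bool → ℝ≥0∞ := fun σ => cylContent s (A ∩ cyl σ)
  have hg_sub (σ : List Bool) : g σ ≤ g (σ ++ [false]) + g (σ ++ [true]) := by
    simp only [g]
    rw [cyl_eq_union σ, inter_union_distrib_left]
    exact cylContent_union_le
  have hg_le (σ : List Bool) : g σ ≤ cylWeight s σ := cylContent_le_cylWeight inter_subset_right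
  have hg_fin (σ : List Bool) : g σ ≠ ∞ := ne_top_of_le_ne_top (cylWeight_ne_top s σ) (hg_le σ)
  have hg_nil : g [] ≠ 0 := by
    simpa [g] using mt (hausdorffMeasure_eq_zero_of_cylContent_eq_zero hs) hH
  obtain ⟨ν, hν⟩ := IsCylAdditive.exists_measure_cyl_eq (isCylAdditive_splitFlow hg_sub hg_fin)
    (by simpa using hg_fin [])
  refine ⟨(g [])⁻¹.toReal, (g [])⁻¹ • ν,
    ENNReal.toReal_pos (ENNReal.inv_ne_zero.2 (hg_fin [])) (ENNReal.inv_ne_top.2 hg_nil),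
    ⟨⟨?_⟩, ?_⟩, fun σ => ?_⟩
  · rw [Measure.smul_apply, ← cyl_nil, hν, splitFlow_nil, smul_eq_mul,
      ENNReal.inv_mul_cancel hg_nil (hg_fin [])]
  · refine (Measure.smul_apply _ _ _).trans ?_
    rw [measure_compl_eq_zero_of_cyl hA fun σ hσ => ?_, smul_zero]
    rw [hν]
    refine nonpos_iff_eq_zero.1 ((splitFlow_le hg_sub σ).trans ?_)
    simp [g, hσ.inter_eq, cylContent_empty]
  · rw [Measure.smul_apply, hν, smul_eq_mul, ENNReal.ofReal_toReal (ENNReal.inv_ne_top.2 hg_nil)]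
    exact mul_le_mul_right ((splitFlow_le hg_sub σ).trans (hg_le σ)) _

lemma exists_inv_two_pow_near {d : ℝ≥0∞} (h₀ : d ≠ 0) (h₁ : d ≤ 1) :
    ∃ n : ℕ, 2⁻¹ ^ (n + 1) < d ∧ d ≤ 2⁻¹ ^ n := by
  lift d to NNReal using ne_top_of_le_ne_top one_ne_top h₁
  obtain ⟨n, hn⟩ := exists_nat_pow_near_of_lt_one (pos_iff_ne_zero.2 (by exact_mod_cast h₀))
    (by exact_mod_cast h₁) (by norm_num : (0 : NNReal) < 2⁻¹) (by norm_num)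
  refine ⟨n, ?_, ?_⟩
  · have := ENNReal.coe_lt_coe.2 hn.1
    rwa [ENNReal.coe_pow, ENNReal.coe_inv two_ne_zero, ENNReal.coe_ofNat] at this
  · have := ENNReal.coe_le_coe.2 hn.2
    rwa [ENNReal.coe_pow, ENNReal.coe_inv two_ne_zero, ENNReal.coe_ofNat] at this

section massDistribution

variable {μ : Measure (ℕ → Bool)} {s : ℝ} {c : ℝ≥0∞}

/-- Every set lies in a cylinder of diameter at most twice its own. -/
lemma measure_le_mul_ediam_rpow (hs : 0 < s) (hc : c ≠ ∞)
    (hμ : ∀ σ, μ (cyl σ) ≤ c * cylWeight s σ) (E : Set (ℕ → Bool)) :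
    μ E ≤ c * 2 ^ s * Metric.ediam E ^ s := by
  rcases E.eq_empty_or_nonempty with rfl | ⟨x, hx⟩
  · simp
  have hcyl (n : ℕ) (hn : Metric.ediam E ≤ 2⁻¹ ^ n) : μ E ≤ c * (2⁻¹ ^ n) ^ s :=
    (measure_mono (subset_cyl_ofFn_of_ediam_le hx hn)).trans
      ((hμ _).trans_eq (by rw [cylWeight_eq_inv_two_pow_rpow, List.length_ofFn]))
  rcases eq_or_ne (Metric.ediam E) 0 with h₀ | h₀
  · have hlim : Tendsto (fun n : ℕ => c * ((2⁻¹ : ℝ≥0∞) ^ n) ^ s) atTop (𝓝 0) := by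
      have := (ENNReal.continuous_rpow_const (y := s)).tendsto 0 |>.comp
        (ENNReal.tendsto_pow_atTop_nhds_zero_of_lt_one (r := 2⁻¹) (by norm_num))
      simpa [Function.comp_def, ENNReal.zero_rpow_of_pos hs] using
        ENNReal.Tendsto.const_mul this (.inr hc)
    exact (ge_of_tendsto' hlim fun n => hcyl n (h₀ ▸ zero_le)).trans zero_le
  obtain ⟨n, hlt, hle⟩ := exists_inv_two_pow_near h₀ (ediam_le_one E)
  calc μ E ≤ c * (2⁻¹ ^ n) ^ s := hcyl n hle
    _ = c * (2 * 2⁻¹ ^ (n + 1)) ^ s := by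
        rw [pow_succ, mul_left_comm, ENNReal.mul_inv_cancel two_ne_zero ofNat_ne_top, mul_one]
    _ ≤ c * (2 * Metric.ediam E) ^ s := by gcongr
    _ = c * 2 ^ s * Metric.ediam E ^ s := by rw [ENNReal.mul_rpow_of_nonneg _ _ hs.le, mul_assoc]

/-- The mass distribution principle. -/
lemma ofReal_le_dimH_of_measure_cyl_le {A : Set (ℕ → Bool)} (hs : 0 < s) (hc : c ≠ ∞)
    (hμ : ∀ σ, μ (cyl σ) ≤ c * cylWeight s σ) (hA : μ A ≠ 0) : ENNReal.ofReal s ≤ dimH A := by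
  set C := c * 2 ^ s
  have hC : C ≠ ∞ := mul_ne_top hc (rpow_ne_top_of_ne_zero two_ne_zero ofNat_ne_top)
  have hμC (E : Set (ℕ → Bool)) : μ E ≤ C * Metric.ediam E ^ s :=
    measure_le_mul_ediam_rpow hs hc hμ E
  have hC₀ : C ≠ 0 := fun h => hA (nonpos_iff_eq_zero.1 ((hμC A).trans_eq (by rw [h, zero_mul])))
  have hle : C⁻¹ • μ ≤ μH[s] := Measure.le_hausdorffMeasure s _ 1 one_pos fun E _ => by
    rw [Measure.smul_apply, smul_eq_mul, ENNReal.inv_mul_le_iff hC₀ hC]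
    exact hμC E
  refine le_dimH_of_hausdorffMeasure_ne_zero (d := s.toNNReal) ?_
  rw [Real.coe_toNNReal _ hs.le]
  exact ((ENNReal.mul_pos (ENNReal.inv_ne_zero.2 hC) hA).trans_le (hle A)).ne'

end massDistribution

theorem stmt16 (A : Set (ℕ → Bool)) (hA : IsCompact A) :
    dimH A = sSup ((fun s : ℝ => ENNReal.ofReal s) ''
      {s : ℝ | 0 < s ∧ ∃ (c : ℝ) (μ : Measure (ℕ → Bool)), 0 < c ∧
        IsMassDistributionOn μ A ∧
        ∀ σ : List Bool,
          μ (cyl σ) ≤ ENNReal.ofReal c * (2 : ℝ≥0∞) ^ (-s * (σ.length : ℝ))}) := by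
  refine le_antisymm (ENNReal.le_of_forall_nnreal_lt fun r hr => ?_) (sSup_le ?_)
  · rcases eq_zero_or_pos r with rfl | hr₀
    · exact zero_le
    have hH : μH[r] A ≠ 0 := by
      rw [hausdorffMeasure_of_lt_dimH hr]
      exact top_ne_zero
    obtain ⟨c, μ, hc, hμA, hμ⟩ :=
      exists_mass_distribution_of_hausdorffMeasure_ne_zero hA.isClosed hr₀ hH
    exact le_sSup ⟨r, ⟨hr₀, c, μ, hc, hμA, hμ⟩, ofReal_coe_nnreal⟩
  · rintro _ ⟨s, ⟨hs, c, μ, -, ⟨hprob, hμA⟩, hμ⟩, rfl⟩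
    refine ofReal_le_dimH_of_measure_cyl_le hs ofReal_ne_top hμ ?_
    rw [measure_congr (ae_eq_univ.2 hμA), measure_univ]
    exact one_ne_zero
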